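/- arXiv:1508.07918 — 3 statements merged into one kernel-verified Lean document; each statement's English description precedes it below -/
import Mathlib

section
/- For t ≥ 4, the sum d_t = Σ_{B nice subset of {1,...,t-1}} Σ_{x∈B} x satisfies d_t = d_{t-1} + d_{t-2} + (t-1)·F_{t-1}. -/
/-- The set of "nice" subsets of {1,...,t-1}: no two elements differ by exactly 1. -/
def niceSets (t : ℕ) : Finset (Finset ℕ) :=
  (Finset.Icc 1 (t - 1)).powerset.filter (fun B => ∀ x ∈ B, x + 1 ∉ B)

/-- d_t: the sum over nice subsets B of {1,...,t-1} of the sum of the elements of B. -/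
def d (t : ℕ) : ℕ := ∑ B ∈ niceSets t, ∑ x ∈ B, x

lemma mem_niceSets {t : ℕ} {B : Finset ℕ} :
    B ∈ niceSets t ↔ B ⊆ Finset.Icc 1 (t - 1) ∧ ∀ x ∈ B, x + 1 ∉ B := by
  simp [niceSets]

lemma not_top_mem {n : ℕ} {B : Finset ℕ} (hB : B ∈ niceSets (n + 2)) : n + 2 ∉ B := by
  intro h
  have := (mem_niceSets.mp hB).1 h
  simp only [Finset.mem_Icc] at this
  omega

lemma decomp (n : ℕ) :
    niceSets (n + 3) = niceSets (n + 2) ∪ (niceSets (n + 1)).image (insert (n + 2)) := by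
  ext B
  rw [Finset.mem_union, mem_niceSets]
  constructor
  · rintro ⟨hsub, hnice⟩
    have hbnd : ∀ x ∈ B, 1 ≤ x ∧ x ≤ n + 2 := by
      intro x hx
      have := hsub hx
      simp only [Finset.mem_Icc] at this
      omega
    by_cases htop : n + 2 ∈ B
    · right
      rw [Finset.mem_image]
      refine ⟨B.erase (n + 2), mem_niceSets.mpr ⟨?_, ?_⟩, Finset.insert_erase htop⟩
      · intro x hx
        have hx' := Finset.mem_of_mem_erase hx
        have h1 := hbnd x hx'
        have hxne : x ≠ n + 2 := Finset.ne_of_mem_erase hx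
        have hxne2 : x ≠ n + 1 := by
          intro h
          subst h
          exact hnice (n + 1) hx' htop
        simp only [Finset.mem_Icc]
        omega
      · intro x hx hx1
        exact hnice x (Finset.mem_of_mem_erase hx) (Finset.mem_of_mem_erase hx1)
    · left
      refine mem_niceSets.mpr ⟨?_, hnice⟩
      intro x hx
      have h1 := hbnd x hx
      have : x ≠ n + 2 := fun h => htop (h ▸ hx)
      simp only [Finset.mem_Icc]
      omega
  · rintro (h | h)
    · obtain ⟨hsub, hnice⟩ := mem_niceSets.mp h
      refine ⟨?_, hnice⟩
      intro x hx
      have := hsub hx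
      simp only [Finset.mem_Icc] at this ⊢
      omega
    · rw [Finset.mem_image] at h
      obtain ⟨B', hB', rfl⟩ := h
      obtain ⟨hsub, hnice⟩ := mem_niceSets.mp hB'
      have hbnd : ∀ x ∈ B', 1 ≤ x ∧ x ≤ n := by
        intro x hx
        have := hsub hx
        simp only [Finset.mem_Icc] at this
        omega
      constructor
      · intro x hx
        rw [Finset.mem_insert] at hx
        simp only [Finset.mem_Icc]
        rcases hx with rfl | hx
        · omega
        · have := hbnd x hx; omega
      · intro x hx hx1
        rw [Finset.mem_insert] at hx hx1
        rcases hx with rfl | hx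
        · rcases hx1 with h | h
          · omega
          · have := hbnd _ h; omega
        · rcases hx1 with h | h
          · have := hbnd x hx; omega
          · exact hnice x hx h

lemma decomp_disjoint (n : ℕ) :
    Disjoint (niceSets (n + 2)) ((niceSets (n + 1)).image (insert (n + 2))) := by
  rw [Finset.disjoint_left]
  intro B hB hB'
  rw [Finset.mem_image] at hB'
  obtain ⟨B', _, rfl⟩ := hB'
  exact not_top_mem hB (Finset.mem_insert_self _ _)

lemma insert_injOn (n : ℕ) :
    Set.InjOn (insert (n + 2)) (niceSets (n + 1) : Set (Finset ℕ)) := by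
  intro B hB C hC h
  have hBn : n + 2 ∉ B := by
    intro hm
    have := (mem_niceSets.mp hB).1 hm
    simp only [Finset.mem_Icc] at this; omega
  have hCn : n + 2 ∉ C := by
    intro hm
    have := (mem_niceSets.mp hC).1 hm
    simp only [Finset.mem_Icc] at this; omega
  calc B = (insert (n + 2) B).erase (n + 2) := (Finset.erase_insert hBn).symm
    _ = (insert (n + 2) C).erase (n + 2) := by rw [h]
    _ = C := Finset.erase_insert hCn

lemma card_niceSets (m : ℕ) : (niceSets m).card = Nat.fib (m + 1) := by
  induction m using Nat.strong_induction_on with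
  | _ m ih =>
    match m with
    | 0 => decide
    | 1 => decide
    | 2 => decide
    | (n + 3) =>
      rw [decomp n, Finset.card_union_of_disjoint (decomp_disjoint n),
        Finset.card_image_of_injOn (insert_injOn n), ih (n + 2) (by omega),
        ih (n + 1) (by omega)]
      have h : Nat.fib (n + 4) = Nat.fib (n + 2) + Nat.fib (n + 3) :=
        Nat.fib_add_two (n := n + 2)
      show Nat.fib (n + 3) + Nat.fib (n + 2) = Nat.fib (n + 4)
      omega

/-- For t ≥ 4, d_t = d_{t-1} + d_{t-2} + (t-1) F_{t-1}. -/
theorem d_recurrence (t : ℕ) (ht : 4 ≤ t) :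
    d t = d (t - 1) + d (t - 2) + (t - 1) * Nat.fib (t - 1) := by
  obtain ⟨n, rfl⟩ : ∃ n, t = n + 4 := ⟨t - 4, by omega⟩
  have h1 : n + 4 - 1 = (n + 1) + 2 := by omega
  have h2 : n + 4 - 2 = n + 2 := by omega
  rw [h1, h2]
  show d ((n + 1) + 3) = _
  unfold d
  rw [decomp (n + 1), Finset.sum_union (decomp_disjoint (n + 1)),
    Finset.sum_image (fun B hB C hC h => insert_injOn (n + 1) (by simpa using hB) (by simpa using hC) h)]
  have hins : ∀ B ∈ niceSets (n + 2), ∑ x ∈ insert (n + 1 + 2) B, x = (n + 3) + ∑ x ∈ B, x := by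
    intro B hB
    rw [Finset.sum_insert]
    intro hm
    have := (mem_niceSets.mp hB).1 hm
    simp only [Finset.mem_Icc] at this; omega
  rw [Finset.sum_congr rfl hins, Finset.sum_add_distrib, Finset.sum_const, smul_eq_mul,
    card_niceSets]
  have : n + 2 + 1 = (n + 1) + 2 := by omega
  rw [this]
  ring
end

section
/- For t ≥ 2, the total sum of sizes of all partitions with distinct parts that are simultaneously t-core and (t+1)-core equals Σ_{i+j+k=t+1, i,j,k≥1} F_i·F_j·F_k. -/
/-!
A partition with distinct parts is a `(t, t + 1)`-core exactly when its largest part plus its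
number of parts is at most `t`. Such a bound keeps every hook length below `t`. Conversely, along
the first row the hook lengths fall from `λ₁ + ℓ - 1` to `1` in steps of at most `2` (the parts
being distinct), so if `λ₁ + ℓ > t` one of them is `t` or `t + 1`.

Removing the largest part of a partition with `λ₁ + ℓ = t + 2` leaves a partition `μ` with
`μ₁ + ℓ(μ) ≤ t`, and `λ₁ = t + 1 - ℓ(μ)` is recovered from `μ`. So the sets at levels `t + 2`,
`t + 1`, `t` satisfy a Fibonacci recursion, and tracking along it the number of partitions, the sum
of `t + 1 - ℓ` (the part added at the next step) and the total size gives the Fibonacci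
convolutions `F`, `F * F` and `F * F * F`.
-/

/-- The hook length of the box in row i (0-indexed) and column j (1-indexed) of the Young
diagram of the partition (λ_1, ..., λ_ℓ): arm + leg + 1. -/
def hook (l : List ℕ) (i j : ℕ) : ℕ :=
  (l.getD i 0 - j) + ((l.drop (i + 1)).filter (fun p => decide (j ≤ p))).length + 1

/-- A partition is an s-core if none of its hook lengths equals s. -/
def IsCore (l : List ℕ) (s : ℕ) : Prop :=
  ∀ i j, i < l.length → 1 ≤ j → j ≤ l.getD i 0 → hook l i j ≠ s

/-- ψ_n = Σ_{i+j+k=n, i,j,k ≥ 1} F_i F_j F_k. -/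
def psi (n : ℕ) : ℕ :=
  ∑ i ∈ Finset.range (n + 1), ∑ j ∈ Finset.range (n + 1), ∑ k ∈ Finset.range (n + 1),
    if i + j + k = n ∧ 1 ≤ i ∧ 1 ≤ j ∧ 1 ≤ k then Nat.fib i * Nat.fib j * Nat.fib k else 0

open Finset

lemma exists_eq_or_eq_succ_of_step_le_two (f : ℕ → ℕ) {t a b : ℕ} (hab : a ≤ b)
    (ha : t ≤ f a) (hb : f b ≤ t + 1) (hstep : ∀ j, a ≤ j → j < b → f j ≤ f (j + 1) + 2) :
    ∃ j, a ≤ j ∧ j ≤ b ∧ (f j = t ∨ f j = t + 1) := by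
  induction h : b - a generalizing a with
  | zero =>
    obtain rfl : a = b := by omega
    exact ⟨a, le_rfl, le_rfl, by omega⟩
  | succ n ih =>
    by_cases hfa : f a = t ∨ f a = t + 1
    · exact ⟨a, le_rfl, hab, hfa⟩
    · obtain ⟨j, hj, hjb, hfj⟩ := ih (a := a + 1) (by omega)
        (by have := hstep a le_rfl (by omega); omega)
        (fun j hj hjb => hstep j (by omega) hjb) (by omega)
      exact ⟨j, by omega, hjb, hfj⟩

lemma List.Nodup.length_filter_le_length_filter_succ_add_one {L : List ℕ} (hL : L.Nodup)
    (j : ℕ) :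
    (L.filter (fun p => decide (j ≤ p))).length ≤
      (L.filter (fun p => decide (j + 1 ≤ p))).length + 1 := by
  rw [← List.toFinset_card_of_nodup (hL.filter _), ← List.toFinset_card_of_nodup (hL.filter _),
    List.toFinset_filter, List.toFinset_filter]
  calc _ ≤ (insert j (L.toFinset.filter (fun p => decide (j + 1 ≤ p)))).card := by
        refine card_le_card fun p => ?_
        simp only [Finset.mem_filter, mem_insert, decide_eq_true_eq]
        exact fun ⟨hp, hjp⟩ => hjp.eq_or_lt.imp Eq.symm fun h => ⟨hp, h⟩
    _ ≤ _ := card_insert_le _ _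

lemma hook_lt_of_forall_add_length_le {l : List ℕ} {t : ℕ} (hl : ∀ p ∈ l, p + l.length ≤ t)
    {i j : ℕ} (hi : i < l.length) (hj : 1 ≤ j) (hjl : j ≤ l.getD i 0) : hook l i j < t := by
  have hrow : l.getD i 0 + l.length ≤ t := by
    rw [List.getD_eq_getElem _ _ hi]
    exact hl _ (List.getElem_mem hi)
  have hleg : ((l.drop (i + 1)).filter (fun p => decide (j ≤ p))).length ≤ l.length - (i + 1) :=
    (List.length_filter_le _ _).trans List.length_drop.le
  unfold hook
  omega

lemma isCore_of_forall_add_length_le {l : List ℕ} {t s : ℕ} (hl : ∀ p ∈ l, p + l.length ≤ t)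
    (hts : t ≤ s) : IsCore l s :=
  fun _ _ hi hj hjl => (hook_lt_of_forall_add_length_le hl hi hj hjl).trans_le hts |>.ne

lemma hook_cons_zero_one {h : ℕ} {tl : List ℕ} (hpos : ∀ p ∈ h :: tl, 0 < p) :
    hook (h :: tl) 0 1 = h + tl.length := by
  have htl : tl.filter (fun p => decide (1 ≤ p)) = tl :=
    List.filter_eq_self.mpr fun p hp => decide_eq_true (hpos p (List.mem_cons_of_mem _ hp))
  have hh := hpos h List.mem_cons_self
  simp only [hook, List.getD_cons_zero, List.drop_succ_cons, List.drop_zero, htl]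
  omega

lemma hook_cons_zero_self {h : ℕ} {tl : List ℕ} (hlt : ∀ p ∈ tl, p < h) :
    hook (h :: tl) 0 h = 1 := by
  have htl : tl.filter (fun p => decide (h ≤ p)) = [] :=
    List.filter_eq_nil_iff.mpr fun p hp => by simpa using hlt p hp
  simp [hook, htl]

lemma hook_cons_zero_le_succ_add_two {h : ℕ} {tl : List ℕ} (htl : tl.Nodup) (j : ℕ) :
    hook (h :: tl) 0 j ≤ hook (h :: tl) 0 (j + 1) + 2 := by
  have := htl.length_filter_le_length_filter_succ_add_one j
  simp only [hook, List.getD_cons_zero, List.drop_succ_cons, List.drop_zero]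
  omega

lemma forall_add_length_le_of_isCore {l : List ℕ} {t : ℕ} (hs : l.Pairwise (· > ·))
    (hpos : ∀ p ∈ l, 0 < p) (hc : IsCore l t) (hc' : IsCore l (t + 1)) :
    ∀ p ∈ l, p + l.length ≤ t := by
  cases l with
  | nil => simp
  | cons h tl =>
    obtain ⟨hlt, htl⟩ := List.pairwise_cons.mp hs
    suffices h + tl.length < t by
      intro p hp
      have : p ≤ h := (List.mem_cons.mp hp).elim le_of_eq fun hp => (hlt p hp).le
      simp only [List.length_cons]
      omega
    by_contra! hbig
    obtain ⟨j, hj, hjh, hcore⟩ := exists_eq_or_eq_succ_of_step_le_two (hook (h :: tl) 0)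
      (hpos h List.mem_cons_self) (hook_cons_zero_one hpos ▸ hbig)
      (by rw [hook_cons_zero_self hlt]; omega)
      (fun j _ _ => hook_cons_zero_le_succ_add_two htl.nodup j)
    rcases hcore with hcore | hcore
    · exact hc 0 j (by simp) hj (by simpa using hjh) hcore
    · exact hc' 0 j (by simp) hj (by simpa using hjh) hcore

lemma isCore_and_isCore_succ_iff {l : List ℕ} {t : ℕ} (hs : l.Pairwise (· > ·))
    (hpos : ∀ p ∈ l, 0 < p) : IsCore l t ∧ IsCore l (t + 1) ↔ ∀ p ∈ l, p + l.length ≤ t :=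
  ⟨fun ⟨hc, hc'⟩ => forall_add_length_le_of_isCore hs hpos hc hc',
    fun hl => ⟨isCore_of_forall_add_length_le hl le_rfl,
      isCore_of_forall_add_length_le hl t.le_succ⟩⟩

def fibConv (F : ℕ → ℕ) (n : ℕ) : ℕ := ∑ p ∈ antidiagonal n, Nat.fib p.1 * F p.2

lemma fibConv_add_two (F : ℕ → ℕ) (n : ℕ) :
    fibConv F (n + 2) = fibConv F (n + 1) + fibConv F n + F (n + 1) := by
  simp only [fibConv, Nat.sum_antidiagonal_succ, Nat.fib_add_two, add_mul, sum_add_distrib]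
  simp only [Nat.fib_zero, zero_mul, zero_add, Nat.fib_one, one_mul]
  ring

lemma sum_range_sum_range_ite_add_eq {M : Type*} [AddCommMonoid M] (f : ℕ → ℕ → M) {m n : ℕ}
    (hmn : m ≤ n) :
    ∑ j ∈ range (n + 1), ∑ k ∈ range (n + 1), (if j + k = m then f j k else 0) =
      ∑ p ∈ antidiagonal m, f p.1 p.2 := by
  rw [← sum_product', ← sum_filter]
  apply sum_congr _ fun _ _ => rfl
  ext ⟨j, k⟩
  simp only [mem_filter, mem_product, mem_range, HasAntidiagonal.mem_antidiagonal]
  omega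

lemma psi_eq_fibConv (n : ℕ) : psi n = fibConv (fibConv Nat.fib) n := by
  have hterm : ∀ i j k, (if i + j + k = n ∧ 1 ≤ i ∧ 1 ≤ j ∧ 1 ≤ k
      then Nat.fib i * Nat.fib j * Nat.fib k else 0) =
      if j + k = n - i ∧ i ≤ n then Nat.fib i * (Nat.fib j * Nat.fib k) else 0 := by
    intro i j k
    by_cases h : j + k = n - i ∧ i ≤ n
    · rw [if_pos h, mul_assoc]
      split_ifs with hijk
      · rfl
      · obtain rfl | rfl | rfl : i = 0 ∨ j = 0 ∨ k = 0 := by omega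
        all_goals simp
    · rw [if_neg h, if_neg (by omega)]
  rw [fibConv, Nat.sum_antidiagonal_eq_sum_range_succ (fun i m => Nat.fib i * fibConv Nat.fib m)]
  refine sum_congr rfl fun i hi => ?_
  have hin : i ≤ n := Nat.lt_succ_iff.mp (mem_range.mp hi)
  simp only [hterm, hin, and_true]
  rw [sum_range_sum_range_ite_add_eq _ (Nat.sub_le n i), fibConv, mul_sum]

def IsDistinctBounded (t : ℕ) (l : List ℕ) : Prop :=
  l.Pairwise (· > ·) ∧ (∀ p ∈ l, 0 < p) ∧ ∀ p ∈ l, p + l.length ≤ t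

namespace IsDistinctBounded

variable {t : ℕ} {l : List ℕ}

lemma nil (t : ℕ) : IsDistinctBounded t [] := by simp [IsDistinctBounded]

lemma length_le (hl : IsDistinctBounded t l) : l.length ≤ t := by
  cases l with
  | nil => simp
  | cons h tl => exact (Nat.le_add_left _ h).trans (hl.2.2 h List.mem_cons_self)

lemma eq_nil (hl : IsDistinctBounded t l) (ht : t ≤ 1) : l = [] := by
  cases l with
  | nil => rfl
  | cons h tl =>
    have := hl.2.1 h List.mem_cons_self
    have := hl.2.2 h List.mem_cons_self
    simp only [List.length_cons] at this
    omega

lemma mono (hl : IsDistinctBounded t l) {s : ℕ} (hts : t ≤ s) : IsDistinctBounded s l :=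
  ⟨hl.1, hl.2.1, fun p hp => (hl.2.2 p hp).trans hts⟩

lemma cons_sub_length (hl : IsDistinctBounded t l) :
    IsDistinctBounded (t + 2) ((t + 1 - l.length) :: l) := by
  have hlen := hl.length_le
  obtain ⟨hs, hpos, hbound⟩ := hl
  refine ⟨List.pairwise_cons.mpr ⟨fun p hp => ?_, hs⟩, fun p hp => ?_, fun p hp => ?_⟩
  · have := hbound p hp
    omega
  · rcases List.mem_cons.mp hp with rfl | hp
    · omega
    · exact hpos p hp
  · simp only [List.length_cons]
    rcases List.mem_cons.mp hp with rfl | hp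
    · omega
    · have := hbound p hp
      omega

lemma of_cons {h : ℕ} (hl : IsDistinctBounded (t + 2) (h :: l)) (hh : h + l.length = t + 1) :
    IsDistinctBounded t l := by
  obtain ⟨hs, hpos, -⟩ := hl
  obtain ⟨hlt, hs⟩ := List.pairwise_cons.mp hs
  refine ⟨hs, fun p hp => hpos p (List.mem_cons_of_mem _ hp), fun p hp => ?_⟩
  have := hlt p hp
  omega

end IsDistinctBounded

lemma isDistinctBounded_add_two_iff {t : ℕ} {l : List ℕ} :
    IsDistinctBounded (t + 2) l ↔
      IsDistinctBounded (t + 1) l ∨ ∃ μ, IsDistinctBounded t μ ∧ (t + 1 - μ.length) :: μ = l := by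
  constructor
  · intro hl
    by_cases hsmall : ∀ p ∈ l, p + l.length ≤ t + 1
    · exact Or.inl ⟨hl.1, hl.2.1, hsmall⟩
    · right
      push Not at hsmall
      obtain ⟨p, hp, hpbig⟩ := hsmall
      cases l with
      | nil => simp at hp
      | cons h tl =>
        have hph : p ≤ h := (List.mem_cons.mp hp).elim le_of_eq
          fun hp => ((List.pairwise_cons.mp hl.1).1 p hp).le
        have hh := hl.2.2 h List.mem_cons_self
        simp only [List.length_cons] at hpbig hh
        exact ⟨tl, hl.of_cons (by omega), by congr 1; omega⟩
  · rintro (hl | ⟨μ, hμ, rfl⟩)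
    · exact hl.mono (Nat.le_succ _)
    · exact hμ.cons_sub_length

def distinctBounded : ℕ → Finset (List ℕ)
  | 0 => {[]}
  | 1 => {[]}
  | t + 2 => distinctBounded (t + 1) ∪ (distinctBounded t).image fun μ => (t + 1 - μ.length) :: μ

lemma mem_distinctBounded : ∀ {t : ℕ} {l : List ℕ}, l ∈ distinctBounded t ↔ IsDistinctBounded t l
  | 0, _ | 1, _ => by
    rw [distinctBounded, mem_singleton]
    exact ⟨fun h => h ▸ .nil _, fun hl => hl.eq_nil (by omega)⟩
  | t + 2, l => by
    rw [distinctBounded, mem_union, mem_image, mem_distinctBounded, isDistinctBounded_add_two_iff]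
    simp only [mem_distinctBounded]

lemma sum_distinctBounded_add_two {M : Type*} [AddCommMonoid M] (f : List ℕ → M) (t : ℕ) :
    ∑ l ∈ distinctBounded (t + 2), f l =
      ∑ l ∈ distinctBounded (t + 1), f l +
        ∑ μ ∈ distinctBounded t, f ((t + 1 - μ.length) :: μ) := by
  have hdisj : Disjoint (distinctBounded (t + 1))
      ((distinctBounded t).image fun μ => (t + 1 - μ.length) :: μ) := by
    refine disjoint_right.mpr fun l hl hl' => ?_
    obtain ⟨μ, hμ, rfl⟩ := mem_image.mp hl
    have hlen := (mem_distinctBounded.mp hμ).length_le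
    have := (mem_distinctBounded.mp hl').2.2 _ List.mem_cons_self
    simp only [List.length_cons] at this
    omega
  rw [distinctBounded, sum_union hdisj, sum_image fun _ _ _ _ h => (List.cons.inj h).2]

lemma card_distinctBounded : ∀ t, (distinctBounded t).card = Nat.fib (t + 1)
  | 0 | 1 => rfl
  | t + 2 => by
    rw [card_eq_sum_ones, sum_distinctBounded_add_two, ← card_eq_sum_ones, ← card_eq_sum_ones,
      card_distinctBounded (t + 1), card_distinctBounded t, Nat.fib_add_two (n := t + 1),
      add_comm]

lemma sum_sub_length_distinctBounded :
    ∀ t, ∑ l ∈ distinctBounded t, (t + 1 - l.length) = fibConv Nat.fib (t + 2)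
  | 0 | 1 => by decide
  | t + 2 => by
    have hshift : ∀ s, ∀ l ∈ distinctBounded s, s + 2 - l.length = (s + 1 - l.length) + 1 :=
      fun s l hl => by have := (mem_distinctBounded.mp hl).length_le; omega
    rw [sum_distinctBounded_add_two]
    simp only [List.length_cons, Nat.add_sub_add_right]
    rw [sum_congr rfl (hshift (t + 1)), sum_congr rfl (hshift t), sum_add_distrib, sum_add_distrib,
      sum_sub_length_distinctBounded (t + 1), sum_sub_length_distinctBounded t, sum_const, sum_const,
      card_distinctBounded, card_distinctBounded, fibConv_add_two _ (t + 2),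
      Nat.fib_add_two (n := t + 1)]
    simp only [smul_eq_mul, mul_one]
    ring

lemma sum_sum_distinctBounded :
    ∀ t, ∑ l ∈ distinctBounded t, l.sum = fibConv (fibConv Nat.fib) (t + 1)
  | 0 | 1 => by decide
  | t + 2 => by
    rw [sum_distinctBounded_add_two]
    simp only [List.sum_cons]
    rw [sum_add_distrib, sum_sub_length_distinctBounded, sum_sum_distinctBounded (t + 1),
      sum_sum_distinctBounded t, fibConv_add_two _ (t + 1)]
    ring

theorem total_size_distinct_core_general (t : ℕ) :
    ∃ S : Finset (List ℕ),
      (∀ l, l ∈ S ↔ (l.Pairwise (· > ·) ∧ (∀ p ∈ l, 0 < p) ∧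
        IsCore l t ∧ IsCore l (t + 1))) ∧
      ∑ l ∈ S, l.sum = psi (t + 1) := by
  refine ⟨distinctBounded t, fun l => ?_, by rw [sum_sum_distinctBounded, psi_eq_fibConv]⟩
  rw [mem_distinctBounded, IsDistinctBounded]
  exact and_congr_right fun hs => and_congr_right fun hpos =>
    (isCore_and_isCore_succ_iff hs hpos).symm

/-- The total sum of the sizes of all (t, t+1)-core partitions with distinct parts equals
Σ_{i+j+k=t+1, i,j,k≥1} F_i F_j F_k. -/
theorem total_size_distinct_core (t : ℕ) (ht : 2 ≤ t) :
    ∃ S : Finset (List ℕ),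
      (∀ l, l ∈ S ↔ (l.Pairwise (· > ·) ∧ (∀ p ∈ l, 0 < p) ∧
        IsCore l t ∧ IsCore l (t + 1))) ∧
      ∑ l ∈ S, l.sum = psi (t + 1) :=
  total_size_distinct_core_general t
end

section
/- The number cd_3(n) of 3-core partitions of n with distinct parts satisfies Σ_{n≥0} cd_3(n) q^n = Σ_{n≥1} q^{n²} + Σ_{n≥0} q^{n(n+1)}; i.e., cd_3(n) equals the number of representations of n as a positive perfect square plus the number of representations of n as m(m+1) for m ≥ 0. -/
def stair (r : ℕ) : ℕ → List ℕ
  | 0 => []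
  | k + 1 => (2 * k + r) :: stair r k

namespace stair

variable (r : ℕ)

theorem length_eq (k : ℕ) : (stair r k).length = k := by
  induction k with
  | zero => rfl
  | succ k ih => simp [stair, ih]

theorem injective : Function.Injective (stair r) := fun k k' h => by
  simpa only [length_eq] using congrArg List.length h

theorem lt_of_mem {k p : ℕ} (hp : p ∈ stair r k) : p < 2 * k + r := by
  induction k with
  | zero => simp [stair] at hp
  | succ k ih =>
    rcases List.mem_cons.mp hp with rfl | hp
    · omega
    · have := ih hp; omega

theorem pos_of_mem {k p : ℕ} (hr : 0 < r) (hp : p ∈ stair r k) : 0 < p := by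
  induction k with
  | zero => simp [stair] at hp
  | succ k ih =>
    rcases List.mem_cons.mp hp with rfl | hp
    · omega
    · exact ih hp

theorem pairwise_gt (k : ℕ) : (stair r k).Pairwise (· > ·) := by
  induction k with
  | zero => simp [stair]
  | succ k ih => exact List.pairwise_cons.mpr ⟨fun _ => lt_of_mem r, ih⟩

theorem sum_one_eq_sq (k : ℕ) : (stair 1 k).sum = k ^ 2 := by
  induction k with
  | zero => rfl
  | succ k ih => simp only [stair, List.sum_cons, ih]; ring

theorem sum_two_eq_mul_succ (k : ℕ) : (stair 2 k).sum = k * (k + 1) := by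
  induction k with
  | zero => rfl
  | succ k ih => simp only [stair, List.sum_cons, ih]; ring

theorem getD_eq {k i : ℕ} (hi : i < k) : (stair r k).getD i 0 = 2 * (k - 1 - i) + r := by
  induction k generalizing i with
  | zero => omega
  | succ k ih =>
    cases i with
    | zero => simp [stair]
    | succ i => simp only [stair, List.getD_cons_succ, ih (by omega : i < k)]; omega

theorem drop_eq (k i : ℕ) : (stair r k).drop i = stair r (k - i) := by
  induction k generalizing i with
  | zero => simp [stair]
  | succ k ih =>
    cases i with
    | zero => rfl
    | succ i => simpa [stair] using ih i

theorem length_filter_le {j : ℕ} (hr : r ≤ 2) (hj : 1 ≤ j) (k : ℕ) :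
    ((stair r k).filter (fun p => decide (j ≤ p))).length = (2 * k + r - j) / 2 := by
  induction k with
  | zero => simp [stair]; omega
  | succ k ih =>
    rw [stair, List.filter_cons]
    by_cases h : j ≤ 2 * k + r
    · rw [if_pos (decide_eq_true h), List.length_cons, ih]; omega
    · rw [if_neg (by simpa using h), ih]; omega

theorem isCore_three (hr : r ≤ 2) (k : ℕ) : IsCore (stair r k) 3 := by
  intro i j hi hj1 hj2
  rw [length_eq] at hi
  rw [getD_eq r hi] at hj2
  rw [hook, getD_eq r hi, drop_eq, length_filter_le r hr hj1]
  omega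

theorem one_ne_two_of_ne_zero {m : ℕ} (hm : m ≠ 0) (m' : ℕ) : stair 1 m ≠ stair 2 m' := by
  obtain ⟨m, rfl⟩ := Nat.exists_eq_succ_of_ne_zero hm
  intro h
  have := congrArg List.head? h
  cases m' <;> simp [stair] at this
  omega

end stair

theorem IsCore.tail {a s : ℕ} {t : List ℕ} (h : IsCore (a :: t) s) : IsCore t s :=
  fun i j hi hj1 hj2 => by
    simpa [hook] using h (i + 1) j (by simpa using hi) hj1 (by simpa using hj2)

theorem hook_cons_zero (a : ℕ) (t : List ℕ) (j : ℕ) :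
    hook (a :: t) 0 j = a - j + (t.filter (fun p => decide (j ≤ p))).length + 1 := by
  simp [hook]

theorem IsCore.exists_le_add_two {a : ℕ} {t : List ℕ} (h : IsCore (a :: t) 3) (ha : 3 ≤ a) :
    ∃ p ∈ t, a ≤ p + 2 := by
  by_contra! hgap
  refine h 0 (a - 2) (by simp) (by omega) (by simp) ?_
  have hnil : t.filter (fun p => decide (a - 2 ≤ p)) = [] :=
    List.filter_eq_nil_iff.mpr fun p hp => by have := hgap p hp; simp; omega
  rw [hook_cons_zero, hnil]
  simp
  omega

theorem IsCore.ne_add_one {a b : ℕ} {t : List ℕ} (h : IsCore (a :: b :: t) 3)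
    (hb : 0 < b) (ht : ∀ p ∈ t, p < b) : a ≠ b + 1 := by
  rintro rfl
  refine h 0 b (by simp) hb (by simp) ?_
  have hnil : t.filter (fun p => decide (b ≤ p)) = [] :=
    List.filter_eq_nil_iff.mpr fun p hp => by simpa using ht p hp
  rw [hook_cons_zero, List.filter_cons_of_pos (by simp), hnil]
  simp

theorem IsCore.cons_stair {a r k : ℕ} (hr : r = 1 ∨ r = 2) (h : IsCore (a :: stair r k) 3)
    (ha : 0 < a) (hlt : ∀ p ∈ stair r k, p < a) :
    ∃ r', (r' = 1 ∨ r' = 2) ∧ a :: stair r k = stair r' (k + 1) := by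
  cases k with
  | zero =>
    have : a < 3 := by
      by_contra! h3
      obtain ⟨p, hp, -⟩ := h.exists_le_add_two h3
      simp [stair] at hp
    exact ⟨a, by omega, by simp [stair]⟩
  | succ k =>
    have hb : 2 * k + r < a := hlt _ List.mem_cons_self
    have hne : a ≠ 2 * k + r + 1 :=
      h.ne_add_one (by rcases hr with rfl | rfl <;> omega) fun p hp => stair.lt_of_mem r hp
    have hle : a ≤ 2 * k + r + 2 := by
      obtain ⟨p, hp, hap⟩ := h.exists_le_add_two (by omega)
      rcases List.mem_cons.mp hp with rfl | hp
      · omega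
      · have := stair.lt_of_mem r hp
        omega
    exact ⟨r, hr, by rw [show a = 2 * (k + 1) + r by omega]; rfl⟩

theorem eq_stair_of_isCore_three {l : List ℕ} (hl : l.Pairwise (· > ·)) (hpos : ∀ p ∈ l, 0 < p)
    (hcore : IsCore l 3) : ∃ r, (r = 1 ∨ r = 2) ∧ l = stair r l.length := by
  induction l with
  | nil => exact ⟨1, Or.inl rfl, rfl⟩
  | cons a t ih =>
    obtain ⟨hlt, ht⟩ := List.pairwise_cons.mp hl
    obtain ⟨r, hr, hrt⟩ :=
      ih ht (fun p hp => hpos p (List.mem_cons_of_mem a hp)) hcore.tail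
    generalize t.length = k at hrt
    subst hrt
    obtain ⟨r', hr', h⟩ := hcore.cons_stair hr (hpos a List.mem_cons_self) hlt
    exact ⟨r', hr', by simpa only [List.length_cons, stair.length_eq] using h⟩

theorem setOf_distinct_isCore_three_eq (n : ℕ) :
    {l : List ℕ | l.Pairwise (· > ·) ∧ (∀ p ∈ l, 0 < p) ∧ IsCore l 3 ∧ l.sum = n} =
      stair 1 '' {m | 1 ≤ m ∧ n = m ^ 2} ∪ stair 2 '' {m | n = m * (m + 1)} := by
  ext l
  constructor
  · rintro ⟨hl, hpos, hcore, rfl⟩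
    obtain ⟨r, hr | hr, hrl⟩ := eq_stair_of_isCore_three hl hpos hcore <;>
      generalize l.length = k at hrl <;> subst hr hrl
    · cases k with
      | zero => exact Or.inr ⟨0, rfl, rfl⟩
      | succ k => exact Or.inl ⟨k + 1, ⟨k.succ_pos, stair.sum_one_eq_sq _⟩, rfl⟩
    · exact Or.inr ⟨k, stair.sum_two_eq_mul_succ k, rfl⟩
  · rintro (⟨m, ⟨-, rfl⟩, rfl⟩ | ⟨m, rfl, rfl⟩)
    · exact ⟨stair.pairwise_gt 1 m, fun _ => stair.pos_of_mem 1 one_pos,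
        stair.isCore_three 1 one_le_two m, stair.sum_one_eq_sq m⟩
    · exact ⟨stair.pairwise_gt 2 m, fun _ => stair.pos_of_mem 2 two_pos,
        stair.isCore_three 2 le_rfl m, stair.sum_two_eq_mul_succ m⟩

/-- cd_3(n), the number of 3-core partitions of n with distinct parts, equals the number of
representations of n as a positive perfect square plus the number of representations of n
as m(m+1) with m ≥ 0. -/
theorem cd_three (n : ℕ) :
    {l : List ℕ | l.Pairwise (· > ·) ∧ (∀ p ∈ l, 0 < p) ∧ IsCore l 3 ∧ l.sum = n}.ncard =
      {m : ℕ | 1 ≤ m ∧ n = m ^ 2}.ncard + {m : ℕ | n = m * (m + 1)}.ncard := by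
  have hsq : {m : ℕ | 1 ≤ m ∧ n = m ^ 2}.Finite :=
    (Set.finite_Iic n).subset fun m ⟨_, hm⟩ => by simp only [Set.mem_Iic, hm]; nlinarith
  have hpronic : {m : ℕ | n = m * (m + 1)}.Finite :=
    (Set.finite_Iic n).subset fun m (hm : n = _) => by simp only [Set.mem_Iic, hm]; nlinarith
  have hdisj : Disjoint (stair 1 '' {m | 1 ≤ m ∧ n = m ^ 2}) (stair 2 '' {m | n = m * (m + 1)}) :=
    Set.disjoint_left.mpr fun _ ⟨m, ⟨hm, _⟩, hl⟩ ⟨m', _, hl'⟩ =>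
      stair.one_ne_two_of_ne_zero (by omega) m' (hl.trans hl'.symm)
  rw [setOf_distinct_isCore_three_eq, Set.ncard_union_eq hdisj (hsq.image _) (hpronic.image _),
    Set.ncard_image_of_injective _ (stair.injective 1),
    Set.ncard_image_of_injective _ (stair.injective 2)]
end
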